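/- Let G ≤ Aut(X*), with X = {0,1}, be a self-similar group containing two nontrivial elements a and b such that a has trivial root permutation and sections a_0 = 1, a_1 = u, while b has trivial root permutation and sections b_0 = v, b_1 = 1. Then G is not isomorphic to a free group (of any rank). -/

import Mathlib

/-- `f` is an automorphism of the binary rooted tree `X* = List Bool`: a permutation of
the set of finite binary words preserving word length and the prefix relation. -/
def IsTreeAut (f : Equiv.Perm (List Bool)) : Prop :=
  (∀ v : List Bool, (f v).length = v.length) ∧
    ∀ v w : List Bool, v <+: w → f v <+: f w

/-- A subgroup of the permutations of `X* = List Bool` is self-similar if for every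
element `g`, every letter `x` admits a letter `y` and an element `h` of the group with
`g(xw) = y h(w)` for every word `w` (i.e. all sections of elements belong to the
group). -/
def IsSelfSimilar (G : Subgroup (Equiv.Perm (List Bool))) : Prop :=
  ∀ g ∈ G, ∀ x : Bool, ∃ y : Bool, ∃ h ∈ G, ∀ w : List Bool, g (x :: w) = y :: h w

universe u

/-! The elements `a` and `b` move disjoint sets of words (`a` only words beginning with `1`, `b`
only words beginning with `0`), so they commute. In a free group commuting elements lie in a
common cyclic subgroup: the subgroup they generate is free by Nielsen–Schreier and abelian, and
an abelian free group has at most one generator. Hence `a ^ m = b ^ n` with `m ≠ 0`, and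
disjointness forces `a ^ m = 1`, which is impossible in the torsion-free group `G` since
`a ≠ 1`. -/

theorem FreeGroup.subsingleton_of_forall_commute_of {α : Type*}
    (h : ∀ s t : α, Commute (FreeGroup.of s) (FreeGroup.of t)) : Subsingleton α := by
  classical
  refine ⟨fun s t => by_contra fun hst => ?_⟩
  let f : α → Equiv.Perm (Fin 3) := fun r => if r = s then Equiv.swap 0 1 else Equiv.swap 1 2
  have hf := ((h s t).map (FreeGroup.lift f)).eq
  simp only [FreeGroup.lift_apply_of, f, if_neg (Ne.symm hst)] at hf
  exact absurd hf (by decide)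

namespace IsFreeGroup

variable (G : Type*) [Group G] [IsFreeGroup G]

instance isMulTorsionFree : IsMulTorsionFree G :=
  let e := toFreeGroup G
  e.injective.isMulTorsionFree e.toMonoidHom

theorem isCyclic_of_isMulCommutative [IsMulCommutative G] : IsCyclic G := by
  let e := toFreeGroup G
  have : Subsingleton (Generators G) :=
    FreeGroup.subsingleton_of_forall_commute_of fun s t => by
      simpa [commute_iff_eq] using congrArg e (mul_comm' (e.symm (.of s)) (e.symm (.of t)))
  have : IsCyclic (FreeGroup (Generators G)) := by
    cases isEmpty_or_nonempty (Generators G)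
    · infer_instance
    · have := uniqueOfSubsingleton (Classical.arbitrary (Generators G))
      infer_instance
  exact e.isCyclic.mpr this

variable {G}

theorem exists_mem_zpowers_of_commute {x y : G} (hxy : Commute x y) :
    ∃ c : G, x ∈ Subgroup.zpowers c ∧ y ∈ Subgroup.zpowers c := by
  let K := Subgroup.closure {x, y}
  have : IsMulCommutative K := Subgroup.isMulCommutative_closure <| by
    simp only [Set.mem_insert_iff, Set.mem_singleton_iff]
    rintro _ (rfl | rfl) _ (rfl | rfl) <;> first | rfl | exact hxy.eq | exact hxy.eq.symm
  obtain ⟨c, hc⟩ := (isCyclic_of_isMulCommutative K).exists_generator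
  obtain ⟨p, hp⟩ := hc ⟨x, Subgroup.subset_closure (by simp)⟩
  obtain ⟨q, hq⟩ := hc ⟨y, Subgroup.subset_closure (by simp)⟩
  exact ⟨c, ⟨p, congrArg Subtype.val hp⟩, ⟨q, congrArg Subtype.val hq⟩⟩

end IsFreeGroup

theorem exists_zpow_eq_zpow_of_mem_zpowers {G : Type*} [Group G] {c x y : G}
    (hx : x ∈ Subgroup.zpowers c) (hy : y ∈ Subgroup.zpowers c) (hy1 : y ≠ 1) :
    ∃ m n : ℤ, m ≠ 0 ∧ x ^ m = y ^ n := by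
  obtain ⟨p, rfl⟩ := hx
  obtain ⟨q, rfl⟩ := hy
  refine ⟨q, p, fun hq => hy1 (by simp [hq]), ?_⟩
  simp only [← zpow_mul, mul_comm]

theorem Equiv.Perm.Disjoint.zpow_eq_one_of_zpow_eq_zpow {α : Type*} {σ τ : Equiv.Perm α}
    (h : σ.Disjoint τ) {m n : ℤ} (hmn : σ ^ m = τ ^ n) : σ ^ m = 1 :=
  ((h.zpow_disjoint_zpow m (-n)).mul_eq_one_iff.mp (by rw [hmn, zpow_neg, mul_inv_cancel])).1

theorem self_similar_not_free (G : Subgroup (Equiv.Perm (List Bool)))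
    (a b : Equiv.Perm (List Bool)) (haG : a ∈ G) (hbG : b ∈ G)
    (ha : a ≠ 1) (hb : b ≠ 1)
    (haNil : a [] = [])
    (ha0 : ∀ w : List Bool, a (false :: w) = false :: w)
    (hb1 : ∀ w : List Bool, b (true :: w) = true :: w) :
    ∀ ι : Type u, ¬ Nonempty (G ≃* FreeGroup ι) := by
  rintro ι ⟨e⟩
  have : IsFreeGroup G := .ofMulEquiv e.symm
  have hab : a.Disjoint b := by
    rintro (_ | ⟨_ | _, w⟩)
    exacts [.inl haNil, .inl (ha0 w), .inr (hb1 w)]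
  let A : G := ⟨a, haG⟩
  let B : G := ⟨b, hbG⟩
  have hB : B ≠ 1 := fun h => hb (congrArg Subtype.val h)
  obtain ⟨c, hAc, hBc⟩ :=
    IsFreeGroup.exists_mem_zpowers_of_commute (Subtype.ext hab.commute.eq : Commute A B)
  obtain ⟨m, n, hm, hAB⟩ := exists_zpow_eq_zpow_of_mem_zpowers hAc hBc hB
  have hAm : A ^ m = 1 := Subtype.ext <| by
    simpa using hab.zpow_eq_one_of_zpow_eq_zpow (congrArg Subtype.val hAB)
  exact ha (congrArg Subtype.val ((IsMulTorsionFree.zpow_eq_one_iff_left hm).mp hAm))
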